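/- arXiv:2103.12590 — 5 statements merged into one kernel-verified Lean document; each statement's English description precedes it below -/
import Mathlib

section
/- For every positive integer n, H_n^{(3)} = ∑_{k=1}^{n-1} n/(k(n-k)^3) - (1/2)∑_{k=1}^{n-1} n/(k^2(n-k)^2) + 1/n^3. -/
open Real Filter Finset

noncomputable def Li (m : ℕ) (x : ℝ) : ℝ := ∑' n : ℕ, x ^ (n + 1) / (n + 1 : ℝ) ^ m

noncomputable def H (p n : ℕ) : ℝ := ∑ j ∈ Finset.Icc 1 n, 1 / (j : ℝ) ^ p

noncomputable def Hbar (p n : ℕ) : ℝ := ∑ j ∈ Finset.Icc 1 n, (-1 : ℝ) ^ (j - 1) / (j : ℝ) ^ p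

/-!
Write `m = n - k`, so that `n = k + m`. Partial fractions give
`n / (k m³) = 1 / m³ + 1 / (k m²)` and `n / (k² m²) = 1 / (k m²) + 1 / (k² m)`.
The reflection `k ↦ n - k` of `{1, …, n - 1}` swaps `k` and `m`, so the last two sums are equal
and `∑ 1 / m³ = H_{n-1}^{(3)}`; hence the right-hand side is `H_{n-1}^{(3)} + 1 / n³ = H_n^{(3)}`.
-/

theorem H_succ (p n : ℕ) : H p (n + 1) = H p n + 1 / ((n : ℝ) + 1) ^ p := by
  rw [H, sum_Icc_succ_top (by omega), ← H]
  push_cast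
  rfl

theorem sum_Icc_one_sub_one_reflect (n : ℕ) (g : ℝ → ℝ → ℝ) :
    ∑ k ∈ Icc 1 (n - 1), g k ((n : ℝ) - k) = ∑ k ∈ Icc 1 (n - 1), g ((n : ℝ) - k) k := by
  refine sum_nbij' (n - ·) (n - ·) ?_ ?_ ?_ ?_ ?_ <;> simp only [mem_Icc] <;> intro k hk
  · omega
  · omega
  · omega
  · omega
  · rw [Nat.cast_sub (by omega), sub_sub_cancel]

theorem cast_ne_zero_and_sub_ne_zero_of_mem_Icc {n k : ℕ} (hk : k ∈ Icc 1 (n - 1)) :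
    (k : ℝ) ≠ 0 ∧ (n : ℝ) - k ≠ 0 := by
  rw [mem_Icc] at hk
  refine ⟨by exact_mod_cast (by omega : k ≠ 0), sub_ne_zero.mpr ?_⟩
  exact_mod_cast (by omega : n ≠ k)

theorem sum_div_mul_sub_pow_three (n : ℕ) :
    ∑ k ∈ Icc 1 (n - 1), (n : ℝ) / (k * ((n : ℝ) - k) ^ 3)
      = H 3 (n - 1) + ∑ k ∈ Icc 1 (n - 1), 1 / ((k : ℝ) * ((n : ℝ) - k) ^ 2) := by
  have hcubes : ∑ k ∈ Icc 1 (n - 1), 1 / ((n : ℝ) - k) ^ 3 = H 3 (n - 1) :=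
    sum_Icc_one_sub_one_reflect n (fun _ m => 1 / m ^ 3)
  rw [← hcubes, ← sum_add_distrib]
  refine sum_congr rfl fun k hk => ?_
  obtain ⟨hk0, hm0⟩ := cast_ne_zero_and_sub_ne_zero_of_mem_Icc hk
  field_simp
  ring

theorem sum_div_sq_mul_sub_sq (n : ℕ) :
    ∑ k ∈ Icc 1 (n - 1), (n : ℝ) / ((k : ℝ) ^ 2 * ((n : ℝ) - k) ^ 2)
      = 2 * ∑ k ∈ Icc 1 (n - 1), 1 / ((k : ℝ) * ((n : ℝ) - k) ^ 2) := by
  have hswap : ∑ k ∈ Icc 1 (n - 1), 1 / ((k : ℝ) * ((n : ℝ) - k) ^ 2)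
      = ∑ k ∈ Icc 1 (n - 1), 1 / ((k : ℝ) ^ 2 * ((n : ℝ) - k)) := by
    rw [sum_Icc_one_sub_one_reflect n (fun a b => 1 / (a * b ^ 2))]
    exact sum_congr rfl fun k _ => by rw [mul_comm]
  rw [two_mul]
  nth_rw 2 [hswap]
  rw [← sum_add_distrib]
  refine sum_congr rfl fun k hk => ?_
  obtain ⟨hk0, hm0⟩ := cast_ne_zero_and_sub_ne_zero_of_mem_Icc hk
  field_simp
  ring

theorem stmt2_general (n : ℕ) :
    H 3 n = (∑ k ∈ Finset.Icc 1 (n - 1), (n : ℝ) / (k * ((n : ℝ) - k) ^ 3))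
      - (1 / 2) * (∑ k ∈ Finset.Icc 1 (n - 1), (n : ℝ) / ((k : ℝ) ^ 2 * ((n : ℝ) - k) ^ 2))
      + 1 / (n : ℝ) ^ 3 := by
  rw [sum_div_mul_sub_pow_three, sum_div_sq_mul_sub_sq]
  rcases n with _ | n
  · simp [H]
  · rw [H_succ]
    push_cast
    ring

theorem stmt2 (n : ℕ) (hn : 1 ≤ n) :
    H 3 n = (∑ k ∈ Finset.Icc 1 (n - 1), (n : ℝ) / (k * ((n : ℝ) - k) ^ 3))
      - (1 / 2) * (∑ k ∈ Finset.Icc 1 (n - 1), (n : ℝ) / ((k : ℝ) ^ 2 * ((n : ℝ) - k) ^ 2))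
      + 1 / (n : ℝ) ^ 3 :=
  stmt2_general n
end

section
/- Let p and n be positive integers with p + n even. Then the alternating harmonic number of order p satisfies H̄_n^{(p)} = ((n+1)/2) · ∑_{j=1}^{p} (-1)^j ∑_{ℓ=1}^{n} (-1)^{n+1-ℓ} / (ℓ^j (n+1-ℓ)^{p+1-j}). -/
/-! For `a, b ≠ 0` the partial-fraction identity
`(a + b) * ∑_{j=1}^p (-1)^j / (a^j b^(p+1-j)) = (-1)^p / a^p - 1 / b^p` follows by induction
on `p`. With `a = l` and `b = n + 1 - l` one has `a + b = n + 1` for every `l`, so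
`(n + 1)` times the double sum splits into two single sums weighted by `(-1)^(n+1-l)`. Since
`p + n` is even, the first is `H̄_n^{(p)}`; after the reflection `l ↦ n + 1 - l` the second is
`-H̄_n^{(p)}`. Hence `(n + 1)` times the double sum is `2 H̄_n^{(p)}`. -/

open Real Filter Finset

theorem sum_neg_one_pow_div_pow_mul_pow_mul_add {K : Type*} [Field K] {a b : K}
    (ha : a ≠ 0) (hb : b ≠ 0) (p : ℕ) :
    (∑ j ∈ Icc 1 p, (-1) ^ j / (a ^ j * b ^ (p + 1 - j))) * (a + b) =
      (-1) ^ p / a ^ p - 1 / b ^ p := by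
  induction p with
  | zero => simp
  | succ p ih =>
    have hshift : ∀ j ∈ Icc 1 p, (-1 : K) ^ j / (a ^ j * b ^ (p + 1 + 1 - j)) =
        (-1) ^ j / (a ^ j * b ^ (p + 1 - j)) / b := by
      intro j hj
      rw [show p + 1 + 1 - j = p + 1 - j + 1 by grind, pow_succ, ← mul_assoc, ← div_div]
    rw [sum_Icc_succ_top (by omega), sum_congr rfl hshift, ← sum_div, add_mul, div_mul_eq_mul_div,
      ih, Nat.add_sub_cancel_left]
    field_simp
    ring

theorem sum_Icc_one_reflect {M : Type*} [AddCommMonoid M] (f : ℕ → M) (n : ℕ) :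
    ∑ l ∈ Icc 1 n, f (n + 1 - l) = ∑ l ∈ Icc 1 n, f l :=
  sum_nbij' (n + 1 - ·) (n + 1 - ·) (by grind) (by grind) (by grind) (by grind)
    (by grind)

theorem sum_neg_one_pow_div_reflect_eq_neg_Hbar (p n : ℕ) :
    ∑ l ∈ Icc 1 n, (-1 : ℝ) ^ (n + 1 - l) / ((n : ℝ) + 1 - l) ^ p = -Hbar p n := by
  have hcast : ∀ l ∈ Icc 1 n, ((n : ℝ) + 1 - l) = ((n + 1 - l : ℕ) : ℝ) := by
    intro l hl
    rw [Nat.cast_sub (by grind)]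
    push_cast; ring
  rw [sum_congr rfl fun l hl => by rw [hcast l hl],
    sum_Icc_one_reflect (fun m => (-1 : ℝ) ^ m / (m : ℝ) ^ p), Hbar, ← sum_neg_distrib]
  refine sum_congr rfl fun l hl => ?_
  obtain ⟨k, rfl⟩ : ∃ k, l = k + 1 := ⟨l - 1, by grind⟩
  simp only [pow_succ, Nat.add_sub_cancel]
  ring

theorem sum_neg_one_pow_mul_div_eq_Hbar {p n : ℕ} (heven : Even (p + n)) :
    ∑ l ∈ Icc 1 n, (-1 : ℝ) ^ (n + 1 - l) * ((-1) ^ p / (l : ℝ) ^ p) = Hbar p n := by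
  refine sum_congr rfl fun l hl => ?_
  rw [← mul_div_assoc, ← pow_add]
  congr 1
  refine neg_one_pow_congr ?_
  rw [show n + 1 - l + p = p + n - (l - 1) by grind, Nat.even_sub (by grind)]
  exact iff_true_left heven

theorem double_sum_mul_succ_eq_sub (p n : ℕ) :
    (∑ j ∈ Icc 1 p, (-1 : ℝ) ^ j * ∑ l ∈ Icc 1 n, (-1 : ℝ) ^ (n + 1 - l) /
        ((l : ℝ) ^ j * ((n : ℝ) + 1 - l) ^ (p + 1 - j))) * ((n : ℝ) + 1) =
      ∑ l ∈ Icc 1 n, (-1 : ℝ) ^ (n + 1 - l) * ((-1) ^ p / (l : ℝ) ^ p) -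
        ∑ l ∈ Icc 1 n, (-1 : ℝ) ^ (n + 1 - l) / ((n : ℝ) + 1 - l) ^ p := by
  have hswap : ∑ j ∈ Icc 1 p, (-1 : ℝ) ^ j * ∑ l ∈ Icc 1 n, (-1 : ℝ) ^ (n + 1 - l) /
        ((l : ℝ) ^ j * ((n : ℝ) + 1 - l) ^ (p + 1 - j)) =
      ∑ l ∈ Icc 1 n, (-1 : ℝ) ^ (n + 1 - l) *
        ∑ j ∈ Icc 1 p, (-1 : ℝ) ^ j / ((l : ℝ) ^ j * ((n : ℝ) + 1 - l) ^ (p + 1 - j)) := by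
    simp only [mul_sum]
    rw [sum_comm]
    refine sum_congr rfl fun l _ => sum_congr rfl fun j _ => ?_
    ring
  rw [hswap, sum_mul, ← sum_sub_distrib]
  refine sum_congr rfl fun l hl => ?_
  have hl : (1 : ℝ) ≤ l ∧ (l : ℝ) ≤ n := by simp only [mem_Icc] at hl; exact_mod_cast hl
  have hpartial := sum_neg_one_pow_div_pow_mul_pow_mul_add (a := (l : ℝ))
    (b := (n : ℝ) + 1 - l) (by linarith) (by linarith) p
  rw [add_sub_cancel] at hpartial
  rw [mul_assoc, hpartial]
  ring

theorem stmt4_general (p n : ℕ) (heven : Even (p + n)) :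
    Hbar p n = (((n : ℝ) + 1) / 2) *
      ∑ j ∈ Finset.Icc 1 p, (-1 : ℝ) ^ j *
        ∑ l ∈ Finset.Icc 1 n, (-1 : ℝ) ^ (n + 1 - l) /
          ((l : ℝ) ^ j * ((n : ℝ) + 1 - l) ^ (p + 1 - j)) := by
  have htwice := double_sum_mul_succ_eq_sub p n
  rw [sum_neg_one_pow_mul_div_eq_Hbar heven, sum_neg_one_pow_div_reflect_eq_neg_Hbar] at htwice
  field_simp
  linarith

theorem stmt4 (p n : ℕ) (hp : 1 ≤ p) (hn : 1 ≤ n) (heven : Even (p + n)) :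
    Hbar p n = (((n : ℝ) + 1) / 2) *
      ∑ j ∈ Finset.Icc 1 p, (-1 : ℝ) ^ j *
        ∑ l ∈ Finset.Icc 1 n, (-1 : ℝ) ^ (n + 1 - l) /
          ((l : ℝ) ^ j * ((n : ℝ) + 1 - l) ^ (p + 1 - j)) :=
  stmt4_general p n heven
end

section
/- Let p be an odd positive integer and x a real number with |x| < 1. Then ∑_{n=1}^∞ (H_n^{(p)}/n) x^n = (1/2) ∑_{j=1}^{p} (-1)^{j-1} Li_j(x) Li_{p+1-j}(x) + Li_{p+1}(x). -/
open Real Filter Finset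

private lemma geom_summable {x : ℝ} (hx : |x| < 1) :
    Summable (fun n : ℕ => |x| ^ (n + 1)) := by
  have h := summable_geometric_of_lt_one (abs_nonneg x) hx
  simpa [pow_succ] using h.mul_right |x|

private lemma geom2_summable {x : ℝ} (hx : |x| < 1) :
    Summable (fun km : ℕ × ℕ => |x| ^ (km.1 + km.2 + 2)) := by
  have h := summable_mul_of_summable_norm (f := fun n : ℕ => |x| ^ (n + 1))
    (g := fun n : ℕ => |x| ^ (n + 1)) (by simpa using (geom_summable hx).abs)
    (by simpa using (geom_summable hx).abs)
  apply h.congr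
  intro km
  rw [← pow_add]
  congr 1
  omega

private lemma summable_of_bound {x : ℝ} (hx : |x| < 1) {f : ℕ × ℕ → ℝ}
    (hf : ∀ km : ℕ × ℕ, |f km| ≤ |x| ^ (km.1 + km.2 + 2)) : Summable f :=
  Summable.of_norm_bounded (geom2_summable hx) (fun km => by
    simpa [Real.norm_eq_abs] using hf km)

private lemma abs_div_le {x : ℝ} (a : ℕ) {c : ℝ} (hc : 1 ≤ c) : |x ^ a / c| ≤ |x| ^ a := by
  rw [abs_div, abs_pow, abs_of_pos (lt_of_lt_of_le zero_lt_one hc)]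
  exact div_le_self (pow_nonneg (abs_nonneg x) a) hc

private lemma one_le_cast_pow (k q : ℕ) : (1 : ℝ) ≤ ((k : ℝ) + 1) ^ q :=
  one_le_pow₀ (le_add_of_nonneg_left (Nat.cast_nonneg k))

private lemma one_le_mul' {a b : ℝ} (ha : 1 ≤ a) (hb : 1 ≤ b) : 1 ≤ a * b := by nlinarith

private lemma Li_summable {x : ℝ} (hx : |x| < 1) (m : ℕ) :
    Summable (fun n : ℕ => x ^ (n + 1) / ((n : ℝ) + 1) ^ m) := by
  apply Summable.of_norm_bounded (geom_summable hx)
  intro n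
  rw [Real.norm_eq_abs]
  exact abs_div_le _ (one_le_cast_pow n m)

private lemma sum_Icc_one (f : ℕ → ℝ) (N : ℕ) :
    ∑ j ∈ Icc 1 N, f j = ∑ i ∈ range N, f (i + 1) := by
  rw [← Finset.Ico_add_one_right_eq_Icc, Finset.sum_Ico_eq_sum_range]
  simp [add_comm]

private lemma pf (a b : ℝ) (ha : 0 < a) (hb : 0 < b) (p : ℕ) :
    1 / (a ^ p * (a + b)) =
      (∑ i ∈ range p, (-1 : ℝ) ^ i / (b ^ (i + 1) * a ^ (p - i))) +
        (-1) ^ p / (b ^ p * (a + b)) := by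
  induction p with
  | zero => simp
  | succ p ih =>
    have hab : (0:ℝ) < a + b := by linarith
    have key : 1 / (a ^ (p + 1) * (a + b)) =
        1 / (b * a ^ (p + 1)) - (1 / b) * (1 / (a ^ p * (a + b))) := by
      field_simp
      ring
    rw [key, ih, Finset.sum_range_succ']
    have h2 : ∀ i ∈ range p, (-1 : ℝ) ^ (i + 1) / (b ^ (i + 1 + 1) * a ^ (p + 1 - (i + 1)))
        = -((1 / b) * ((-1) ^ i / (b ^ (i + 1) * a ^ (p - i)))) := by
      intro i hi
      have h3 : p + 1 - (i + 1) = p - i := by omega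
      rw [h3]
      field_simp
      ring
    rw [Finset.sum_congr rfl h2, Finset.sum_neg_distrib, ← Finset.mul_sum]
    simp only [pow_zero, Nat.sub_zero, pow_succ]
    field_simp
    ring

theorem stmt5 (p : ℕ) (hp : 1 ≤ p) (hpodd : Odd p) (x : ℝ) (hx : |x| < 1) :
    Filter.Tendsto (fun N => ∑ n ∈ Finset.Icc 1 N, H p n / (n : ℝ) * x ^ n)
      Filter.atTop
      (nhds ((1 / 2) * (∑ j ∈ Finset.Icc 1 p,
          (-1 : ℝ) ^ (j - 1) * Li j x * Li (p + 1 - j) x) + Li (p + 1) x)) := by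
  classical
  set A : ℕ × ℕ → ℝ := fun nk =>
    if nk.2 ≤ nk.1 then x ^ (nk.1 + 1) / (((nk.1 : ℝ) + 1) * ((nk.2 : ℝ) + 1) ^ p) else 0 with hA
  set D : ℕ × ℕ → ℝ := fun nk =>
    if nk.2 = nk.1 then x ^ (nk.1 + 1) / (((nk.1 : ℝ) + 1) * ((nk.2 : ℝ) + 1) ^ p) else 0 with hD
  set B : ℕ × ℕ → ℝ := fun nk =>
    if nk.2 < nk.1 then x ^ (nk.1 + 1) / (((nk.1 : ℝ) + 1) * ((nk.2 : ℝ) + 1) ^ p) else 0 with hB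
  set v : ℕ × ℕ → ℝ := fun km =>
    x ^ (km.1 + km.2 + 2) / ((((km.1 : ℝ) + (km.2 : ℝ)) + 2) * ((km.1 : ℝ) + 1) ^ p) with hv
  set u : ℕ → ℕ × ℕ → ℝ := fun i km =>
    (-1 : ℝ) ^ i * ((x ^ (km.1 + 1) / ((km.1 : ℝ) + 1) ^ (p - i)) *
      (x ^ (km.2 + 1) / ((km.2 : ℝ) + 1) ^ (i + 1))) with hu
  set w : ℕ × ℕ → ℝ := fun km =>
    (-1 : ℝ) ^ p * (x ^ (km.1 + km.2 + 2) /
      (((km.2 : ℝ) + 1) ^ p * (((km.1 : ℝ) + (km.2 : ℝ)) + 2))) with hw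
  have hcast2 : ∀ km : ℕ × ℕ, (1 : ℝ) ≤ ((km.1 : ℝ) + (km.2 : ℝ)) + 2 := by
    intro km
    have := Nat.cast_nonneg (α := ℝ) km.1
    have := Nat.cast_nonneg (α := ℝ) km.2
    linarith
  -- summability of v, u i, w
  have hvsum : Summable v := by
    apply summable_of_bound hx
    intro km
    exact abs_div_le _ (one_le_mul' (hcast2 km) (one_le_cast_pow km.1 p))
  have husum : ∀ i : ℕ, Summable (u i) := by
    intro i
    apply summable_of_bound hx
    intro km
    rw [hu]
    simp only
    rw [abs_mul, abs_pow, abs_neg, abs_one, one_pow, one_mul, abs_mul]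
    have h1 := abs_div_le (x := x) (km.1 + 1) (one_le_cast_pow km.1 (p - i))
    have h2 := abs_div_le (x := x) (km.2 + 1) (one_le_cast_pow km.2 (i + 1))
    calc |x ^ (km.1 + 1) / ((km.1:ℝ) + 1) ^ (p - i)| * |x ^ (km.2 + 1) / ((km.2:ℝ) + 1) ^ (i + 1)|
        ≤ |x| ^ (km.1 + 1) * |x| ^ (km.2 + 1) :=
          mul_le_mul h1 h2 (abs_nonneg _) (pow_nonneg (abs_nonneg x) _)
      _ = |x| ^ (km.1 + km.2 + 2) := by rw [← pow_add]; congr 1; omega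
  have hwsum : Summable w := by
    apply summable_of_bound hx
    intro km
    rw [hw]
    simp only
    rw [abs_mul, abs_pow, abs_neg, abs_one, one_pow, one_mul]
    exact abs_div_le _ (one_le_mul' (one_le_cast_pow km.2 p) (hcast2 km))
  have hssum : Summable (fun km => ∑ i ∈ range p, u i km) :=
    summable_sum (fun i _ => husum i)
  -- pointwise partial fraction identity
  have hkey : ∀ km : ℕ × ℕ, v km = (∑ i ∈ range p, u i km) + w km := by
    rintro ⟨k, m⟩
    have hk : (0:ℝ) < (k : ℝ) + 1 := by positivity
    have hm : (0:ℝ) < (m : ℝ) + 1 := by positivity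
    have h := pf ((k:ℝ)+1) ((m:ℝ)+1) hk hm p
    have hx2 : x ^ (k + m + 2) = x ^ (k + 1) * x ^ (m + 1) := by
      rw [← pow_add]; congr 1; omega
    have e1 : v (k, m) = x ^ (k+1) * x ^ (m+1) * (1 / (((k:ℝ)+1) ^ p * (((k:ℝ)+1) + ((m:ℝ)+1)))) := by
      rw [hv]
      simp only
      rw [hx2]
      ring
    rw [e1, h, mul_add, Finset.mul_sum]
    congr 1
    · apply Finset.sum_congr rfl
      intro i hi
      have ha' : (((k:ℝ)+1)) ^ (p - i) ≠ 0 := by positivity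
      have hb' : (((m:ℝ)+1)) ^ (i + 1) ≠ 0 := by positivity
      rw [hu]
      simp only
      field_simp
    · rw [hw]
      simp only
      ring
  -- slices of A and D summable
  have hAslice : ∀ n : ℕ, Summable (fun k => A (n, k)) := by
    intro n
    apply summable_of_ne_finset_zero (s := range (n+1))
    intro k hk
    rw [hA]
    simp only
    rw [if_neg]
    simp only [Finset.mem_range] at hk
    omega
  have hDslice : ∀ n : ℕ, Summable (fun k => D (n, k)) := by
    intro n
    apply summable_of_ne_finset_zero (s := {n})
    intro k hk
    rw [hD]
    simp only
    rw [if_neg]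
    simpa using hk
  -- Summability of A
  have hAsum : Summable A := by
    rw [← summable_abs_iff]
    apply (summable_prod_of_nonneg (fun nk => abs_nonneg _)).2
    constructor
    · intro n
      exact (hAslice n).abs
    · apply Summable.of_nonneg_of_le (fun n => tsum_nonneg (fun k => abs_nonneg _)) ?_
        (geom_summable hx)
      intro n
      rw [tsum_eq_sum (s := range (n+1)) (by
        intro k hk
        rw [hA]
        simp only
        rw [if_neg (by simp only [Finset.mem_range] at hk; omega)]
        exact abs_zero)]
      have hb : ∀ k ∈ range (n+1), |A (n, k)| ≤ |x| ^ (n+1) / ((n:ℝ)+1) := by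
        intro k hk
        rw [hA]
        simp only
        rw [if_pos (by simp only [Finset.mem_range] at hk; omega)]
        rw [abs_div, abs_pow, abs_mul]
        rw [abs_of_pos (by positivity : (0:ℝ) < (n:ℝ)+1),
          abs_of_pos (by positivity : (0:ℝ) < ((k:ℝ)+1)^p)]
        apply div_le_div_of_nonneg_left (pow_nonneg (abs_nonneg x) _) (by positivity)
        exact le_mul_of_one_le_right (by positivity) (one_le_cast_pow k p)
      calc ∑ k ∈ range (n+1), |A (n, k)| ≤ ∑ k ∈ range (n+1), |x| ^ (n+1) / ((n:ℝ)+1) :=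
            Finset.sum_le_sum hb
        _ = |x| ^ (n+1) := by
            rw [Finset.sum_const, Finset.card_range, nsmul_eq_mul]
            push_cast
            field_simp
  -- A = D + B
  have hADB : ∀ nk : ℕ × ℕ, A nk = D nk + B nk := by
    rintro ⟨n, k⟩
    rw [hA, hD, hB]
    simp only
    rcases lt_trichotomy k n with h | h | h
    · rw [if_pos h.le, if_neg (by omega), if_pos h]; ring
    · rw [if_pos h.le, if_pos h, if_neg (by omega)]; ring
    · rw [if_neg (by omega), if_neg (by omega), if_neg (by omega)]; ring
  have hDsum : Summable D := by
    apply Summable.of_norm_bounded hAsum.abs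
    rintro ⟨n, k⟩
    rw [Real.norm_eq_abs, hD, hA]
    simp only
    by_cases h : k = n
    · rw [if_pos h, if_pos (h.le)]
    · rw [if_neg h]
      simp [abs_nonneg]
  have hBsum : Summable B := by
    have hfun : B = fun nk => A nk - D nk := by
      funext nk
      have := hADB nk
      linarith
    rw [hfun]
    exact hAsum.sub hDsum
  -- tsum of D
  have hDval : ∑' nk : ℕ × ℕ, D nk = Li (p+1) x := by
    rw [Summable.tsum_prod' hDsum hDslice]
    have hinner : ∀ n : ℕ, ∑' k : ℕ, D (n, k) = x ^ (n+1) / ((n:ℝ)+1) ^ (p+1) := by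
      intro n
      rw [tsum_eq_single n (by
        intro k hk
        rw [hD]
        simp only
        rw [if_neg hk])]
      have hDnn : D (n, n) = x ^ (n+1) / (((n:ℝ)+1) * ((n:ℝ)+1) ^ p) := by
        simp [hD]
      rw [hDnn]
      ring
    rw [tsum_congr hinner]
    rfl
  -- tsum of B equals tsum of v
  have hBval : ∑' nk : ℕ × ℕ, B nk = ∑' km : ℕ × ℕ, v km := by
    have hinj : Function.Injective (fun km : ℕ × ℕ => (km.1 + km.2 + 1, km.1)) := by
      rintro ⟨a, b⟩ ⟨c, d⟩ h
      simp only [Prod.mk.injEq] at h ⊢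
      omega
    have hsupp : Function.support B ⊆ Set.range (fun km : ℕ × ℕ => (km.1 + km.2 + 1, km.1)) := by
      rintro ⟨n, k⟩ hnk
      simp only [Function.mem_support, hB] at hnk
      have hkn : k < n := by
        by_contra h
        apply hnk
        rw [if_neg h]
      refine Set.mem_range.mpr ⟨(k, n - k - 1), ?_⟩
      simp only [Prod.mk.injEq]
      exact ⟨by omega, trivial⟩
    rw [← hinj.tsum_eq hsupp]
    apply tsum_congr
    rintro ⟨k, m⟩
    rw [hB, hv]
    simp only
    rw [if_pos (by omega : k < k + m + 1)]
    have h1 : k + m + 1 + 1 = k + m + 2 := by omega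
    rw [h1]
    push_cast
    ring_nf
  -- split tsum of v
  have hsplit : ∑' km : ℕ × ℕ, v km =
      (∑ i ∈ range p, ∑' km : ℕ × ℕ, u i km) + ∑' km : ℕ × ℕ, w km := by
    rw [tsum_congr hkey, Summable.tsum_add hssum hwsum, Summable.tsum_finsetSum (fun i _ => husum i)]
  -- value of tsum of u i
  have huval : ∀ i : ℕ, ∑' km : ℕ × ℕ, u i km = (-1:ℝ) ^ i * (Li (p - i) x * Li (i+1) x) := by
    intro i
    have h1 : Summable (fun k : ℕ => ‖x ^ (k+1) / ((k:ℝ)+1) ^ (p - i)‖) := by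
      simpa only [Real.norm_eq_abs] using (Li_summable hx (p - i)).abs
    have h2 : Summable (fun m : ℕ => ‖x ^ (m+1) / ((m:ℝ)+1) ^ (i+1)‖) := by
      simpa only [Real.norm_eq_abs] using (Li_summable hx (i+1)).abs
    calc ∑' km : ℕ × ℕ, u i km
        = (-1:ℝ) ^ i * ∑' km : ℕ × ℕ, (x ^ (km.1+1) / ((km.1:ℝ)+1) ^ (p - i)) *
            (x ^ (km.2+1) / ((km.2:ℝ)+1) ^ (i+1)) := by
          rw [← tsum_mul_left]
      _ = (-1:ℝ) ^ i * ((∑' k : ℕ, x ^ (k+1) / ((k:ℝ)+1) ^ (p - i)) *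
            (∑' m : ℕ, x ^ (m+1) / ((m:ℝ)+1) ^ (i+1))) := by
          rw [tsum_mul_tsum_of_summable_norm h1 h2]
      _ = (-1:ℝ) ^ i * (Li (p - i) x * Li (i+1) x) := rfl
  -- value of tsum of w
  have hwval : ∑' km : ℕ × ℕ, w km = (-1:ℝ) ^ p * ∑' km : ℕ × ℕ, v km := by
    have hpt : ∀ km : ℕ × ℕ, w km = (-1:ℝ) ^ p * v (km.2, km.1) := by
      rintro ⟨k, m⟩
      rw [hw, hv]
      simp only
      have h1 : k + m + 2 = m + k + 2 := by omega
      rw [h1]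
      ring
    rw [tsum_congr hpt, tsum_mul_left]
    congr 1
    exact (Equiv.prodComm ℕ ℕ).tsum_eq v
  -- solve for T
  have hneg : ((-1:ℝ)) ^ p = -1 := Odd.neg_one_pow hpodd
  set T := ∑' km : ℕ × ℕ, v km with hT
  set C := ∑ i ∈ range p, (-1:ℝ) ^ i * (Li (p - i) x * Li (i+1) x) with hC
  have hTeq : T = C - T := by
    have h := hsplit
    rw [hwval, hneg] at h
    rw [Finset.sum_congr rfl (fun i _ => huval i)] at h
    linarith [h]
  have hTval : T = (1/2) * C := by linarith
  -- convert target sum over Icc to C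
  have hCC : ∑ j ∈ Icc 1 p, (-1:ℝ) ^ (j-1) * Li j x * Li (p+1-j) x = C := by
    rw [hC, sum_Icc_one (fun j => (-1:ℝ) ^ (j-1) * Li j x * Li (p+1-j) x) p]
    apply Finset.sum_congr rfl
    intro i hi
    have h1 : i + 1 - 1 = i := by omega
    have h2 : p + 1 - (i+1) = p - i := by omega
    rw [h1, h2]
    ring
  -- relate tsum over n to tsum over A
  have hslice : ∀ n : ℕ, ∑' k : ℕ, A (n, k) = H p (n+1) / ((n:ℝ)+1) * x ^ (n+1) := by
    intro n
    rw [tsum_eq_sum (s := range (n+1)) (by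
      intro k hk
      rw [hA]
      simp only
      rw [if_neg (by simp only [Finset.mem_range] at hk; omega)])]
    have hHn : H p (n+1) = ∑ i ∈ range (n+1), 1 / ((i:ℝ)+1) ^ p := by
      rw [H, sum_Icc_one (fun j => 1 / (j:ℝ) ^ p) (n+1)]
      apply Finset.sum_congr rfl
      intro i _
      push_cast
      ring
    rw [hHn, Finset.sum_div, Finset.sum_mul]
    apply Finset.sum_congr rfl
    intro k hk
    rw [hA]
    simp only
    rw [if_pos (by simp only [Finset.mem_range] at hk; omega)]
    have ha' : ((n:ℝ)+1) ≠ 0 := by positivity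
    have hb' : (((k:ℝ)+1)) ^ p ≠ 0 := by positivity
    field_simp
  have hAval : ∑' nk : ℕ × ℕ, A nk = ∑' n : ℕ, H p (n+1) / ((n:ℝ)+1) * x ^ (n+1) := by
    rw [Summable.tsum_prod' hAsum hAslice]
    exact tsum_congr hslice
  -- summability of coefficient series
  have hgsum : Summable (fun i : ℕ => H p (i+1) / ((i:ℝ)+1) * x ^ (i+1)) := by
    apply Summable.of_norm_bounded (geom_summable hx)
    intro i
    rw [Real.norm_eq_abs]
    have h0 : 0 ≤ H p (i+1) := by
      apply Finset.sum_nonneg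
      intro j hj
      positivity
    have h1 : H p (i+1) ≤ (i:ℝ)+1 := by
      have : H p (i+1) ≤ ∑ j ∈ Icc 1 (i+1), (1:ℝ) := by
        apply Finset.sum_le_sum
        intro j hj
        simp only [Finset.mem_Icc] at hj
        have hj1 : (1:ℝ) ≤ (j:ℝ) := by exact_mod_cast hj.1
        have : (1:ℝ) ≤ (j:ℝ) ^ p := one_le_pow₀ hj1
        rw [div_le_one (by linarith)]
        exact this
      rw [Finset.sum_const, Nat.card_Icc, nsmul_eq_mul, mul_one] at this
      have hcd : i + 1 + 1 - 1 = i + 1 := by omega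
      rw [hcd] at this
      push_cast at this
      linarith
    rw [abs_mul, abs_pow]
    have hd : 0 ≤ H p (i+1) / ((i:ℝ)+1) := div_nonneg h0 (by positivity)
    rw [abs_of_nonneg hd]
    apply mul_le_of_le_one_left (pow_nonneg (abs_nonneg x) _)
    rw [div_le_one (by positivity)]
    exact h1
  -- identify the limit
  have hlimit : (1 / 2) * (∑ j ∈ Finset.Icc 1 p,
      (-1 : ℝ) ^ (j - 1) * Li j x * Li (p + 1 - j) x) + Li (p + 1) x
      = ∑' n : ℕ, H p (n+1) / ((n:ℝ)+1) * x ^ (n+1) := by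
    rw [← hAval, tsum_congr hADB, Summable.tsum_add hDsum hBsum, hDval, hBval, hTval, hCC]
    ring
  -- identify the partial sums
  have hfun : ∀ N : ℕ, ∑ n ∈ Finset.Icc 1 N, H p n / (n : ℝ) * x ^ n
      = ∑ i ∈ range N, H p (i+1) / ((i:ℝ)+1) * x ^ (i+1) := by
    intro N
    rw [sum_Icc_one (fun n => H p n / (n : ℝ) * x ^ n) N]
    apply Finset.sum_congr rfl
    intro i _
    push_cast
    ring_nf
  rw [hlimit]
  exact (hgsum.hasSum.tendsto_sum_nat).congr (fun N => (hfun N).symm)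
end

section
/- For real x with 0 < x < 1, ∑_{n=1}^∞ (H_n^{(2)}/n) x^n = -Li_2(x) log(1-x) - log(x) log^2(1-x) - 2 log(1-x) Li_2(1-x) + 2 Li_3(1-x) - 2 ζ(3) + Li_3(x). -/
/-!
Both sides tend to `0` as `x → 0⁺`, so it suffices that they have the same derivative on
`(0, 1)`. Differentiating the series termwise gives `∑ H_{n+1}^{(2)} xⁿ`, which is the Cauchy
product of `Li₂(x) / x` with the geometric series, i.e. `Li₂(x) / (x (1 - x))`. The closed form
has the same derivative by `Li_{m+1}'(x) = Li_m(x) / x` and `Li₁(x) = -log (1 - x)`.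
-/

open Real Filter Finset

open Topology

section BoundedCoefficients

variable {c : ℕ → ℝ} {C : ℝ}

lemma summable_mul_pow_of_abs_le (hc : ∀ n, |c n| ≤ C) {x : ℝ} (hx : |x| < 1) :
    Summable fun n ↦ c n * x ^ n :=
  .of_norm_bounded ((summable_geometric_of_lt_one (abs_nonneg x) hx).mul_left C) fun n ↦ by
    rw [norm_mul, norm_pow, Real.norm_eq_abs, Real.norm_eq_abs]
    exact mul_le_mul_of_nonneg_right (hc n) (by positivity)

lemma hasDerivAt_tsum_div_succ_mul_pow_succ (hc : ∀ n, |c n| ≤ C) {x : ℝ} (hx : |x| < 1) :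
    HasDerivAt (fun y ↦ ∑' n : ℕ, c n / (n + 1) * y ^ (n + 1))
      (∑' n : ℕ, c n * x ^ n) x := by
  obtain ⟨r, hxr, hr1⟩ := exists_between hx
  have hr0 : 0 ≤ r := (abs_nonneg x).trans hxr.le
  have hC : 0 ≤ C := (abs_nonneg _).trans (hc 0)
  have hx_mem : x ∈ Set.Ioo (-r) r := abs_lt.mp hxr
  have hc' : ∀ n, |c n / (n + 1)| ≤ C := fun n ↦ by
    rw [abs_div, abs_of_pos (by positivity : (0 : ℝ) < n + 1)]
    exact (div_le_self (abs_nonneg _) (by simp)).trans (hc n)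
  refine hasDerivAt_tsum_of_isPreconnected (g := fun n y ↦ c n / (n + 1) * y ^ (n + 1))
    (g' := fun n y ↦ c n * y ^ n)
    ((summable_geometric_of_lt_one hr0 hr1).mul_left C) isOpen_Ioo isPreconnected_Ioo
    (fun n y _ ↦ ?_) (fun n y hy ↦ ?_) hx_mem ?_ hx_mem
  · refine ((hasDerivAt_pow (n + 1) y).const_mul (c n / (n + 1))).congr_deriv ?_
    field_simp
    push_cast
    ring
  · rw [norm_mul, norm_pow, Real.norm_eq_abs, Real.norm_eq_abs]
    have hyr : |y| ≤ r := abs_le.mpr ⟨hy.1.le, hy.2.le⟩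
    exact mul_le_mul (hc n) (pow_le_pow_left₀ (abs_nonneg y) hyr n) (by positivity) hC
  · simpa only [pow_succ, mul_assoc] using (summable_mul_pow_of_abs_le hc' hx).mul_right x

end BoundedCoefficients

lemma Li_apply_zero (m : ℕ) : Li m 0 = 0 := by
  simp [Li]

lemma Li_one_eq_neg_log {x : ℝ} (hx : |x| < 1) : Li 1 x = -log (1 - x) := by
  simpa [Li] using (hasSum_pow_div_log_of_abs_lt_one hx).tsum_eq

lemma Li_succ_eq_tsum (m : ℕ) :
    Li (m + 1) = fun y ↦ ∑' n : ℕ, ((n + 1 : ℝ) ^ m)⁻¹ / (n + 1) * y ^ (n + 1) := by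
  funext y
  refine tsum_congr fun n ↦ ?_
  field_simp
  ring

lemma tsum_inv_succ_pow_mul_pow (m : ℕ) {x : ℝ} (hx0 : x ≠ 0) :
    ∑' n : ℕ, ((n + 1 : ℝ) ^ m)⁻¹ * x ^ n = Li m x / x := by
  rw [eq_div_iff hx0, ← tsum_mul_right]
  refine tsum_congr fun n ↦ ?_
  rw [pow_succ]
  field_simp

lemma abs_inv_succ_pow_le_one (m n : ℕ) : |((n + 1 : ℝ) ^ m)⁻¹| ≤ 1 := by
  rw [abs_inv, abs_of_pos (by positivity)]
  exact inv_le_one_of_one_le₀ (one_le_pow₀ (by simp))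

lemma hasDerivAt_Li_succ (m : ℕ) {x : ℝ} (hx : |x| < 1) (hx0 : x ≠ 0) :
    HasDerivAt (Li (m + 1)) (Li m x / x) x := by
  rw [Li_succ_eq_tsum, ← tsum_inv_succ_pow_mul_pow m hx0]
  exact hasDerivAt_tsum_div_succ_mul_pow_succ (abs_inv_succ_pow_le_one m) hx

lemma continuousOn_Li {m : ℕ} (hm : 2 ≤ m) : ContinuousOn (Li m) (Set.Icc (-1) 1) := by
  refine continuousOn_tsum (fun n ↦ ((continuous_pow (n + 1)).div_const _).continuousOn)
    ((summable_nat_add_iff 1).mpr (Real.summable_nat_pow_inv.mpr hm)) fun n x hx ↦ ?_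
  rw [norm_div, norm_pow, Real.norm_eq_abs, Real.norm_eq_abs,
    abs_of_pos (by positivity : (0 : ℝ) < (n + 1) ^ m), div_eq_mul_inv, Nat.cast_succ]
  exact mul_le_of_le_one_left (by positivity) (pow_le_one₀ (abs_nonneg x) (abs_le.mpr hx))

lemma H_nonneg (p n : ℕ) : 0 ≤ H p n :=
  sum_nonneg fun _ _ ↦ by positivity

lemma H_two_le_two (n : ℕ) : H 2 n ≤ 2 := by
  have h : Icc 1 n = Ioo 0 (n + 1) := by ext; simp; omega
  simpa [H, h] using sum_Ioo_inv_sq_le (α := ℝ) 0 (n + 1)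

lemma abs_H_two_le_two (n : ℕ) : |H 2 n| ≤ 2 := by
  rw [abs_of_nonneg (H_nonneg 2 n)]
  exact H_two_le_two n

lemma sum_Icc_one_eq_sum_range {M : Type*} [AddCommMonoid M] (f : ℕ → M) (N : ℕ) :
    ∑ n ∈ Icc 1 N, f n = ∑ n ∈ range N, f (n + 1) := by
  rw [range_eq_Ico, sum_Ico_add' f 0 N 1]
  rfl

lemma H_succ_eq_sum_range (p n : ℕ) :
    H p (n + 1) = ∑ k ∈ range (n + 1), ((k + 1 : ℝ) ^ p)⁻¹ := by
  rw [H, sum_Icc_one_eq_sum_range]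
  push_cast
  simp only [one_div]

lemma tsum_H_two_succ_mul_pow {x : ℝ} (hx : |x| < 1) (hx0 : x ≠ 0) :
    ∑' n : ℕ, H 2 (n + 1) * x ^ n = Li 2 x / (x * (1 - x)) := by
  have hf : Summable fun n : ℕ ↦ ‖((n + 1 : ℝ) ^ 2)⁻¹ * x ^ n‖ :=
    (summable_mul_pow_of_abs_le (abs_inv_succ_pow_le_one 2) hx).norm
  have hg : Summable fun n : ℕ ↦ ‖x ^ n‖ := by
    simpa [norm_pow] using summable_geometric_of_lt_one (abs_nonneg x) hx
  have hprod := tsum_mul_tsum_eq_tsum_sum_range_of_summable_norm hf hg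
  rw [tsum_inv_succ_pow_mul_pow 2 hx0, tsum_geometric_of_abs_lt_one hx] at hprod
  rw [← div_div, div_eq_mul_inv, hprod]
  refine tsum_congr fun n ↦ ?_
  rw [H_succ_eq_sum_range, sum_mul]
  refine sum_congr rfl fun k hk ↦ ?_
  rw [mul_assoc, ← pow_add, Nat.add_sub_cancel' (Nat.lt_succ_iff.mp (mem_range.mp hk))]

noncomputable def sumH2 (x : ℝ) : ℝ := ∑' n : ℕ, H 2 (n + 1) / (n + 1) * x ^ (n + 1)

noncomputable def sumH2ClosedForm (x : ℝ) : ℝ :=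
  -Li 2 x * log (1 - x) - log x * log (1 - x) ^ 2 - 2 * log (1 - x) * Li 2 (1 - x)
    + 2 * Li 3 (1 - x) - 2 * Li 3 1 + Li 3 x

lemma hasSum_sumH2 {x : ℝ} (hx : |x| < 1) :
    HasSum (fun n : ℕ ↦ H 2 (n + 1) / (n + 1) * x ^ (n + 1)) (sumH2 x) := by
  have hc : ∀ n : ℕ, |H 2 (n + 1) / (n + 1)| ≤ 2 := fun n ↦ by
    rw [abs_div, abs_of_pos (by positivity : (0 : ℝ) < n + 1)]
    exact (div_le_self (abs_nonneg _) (by simp)).trans (abs_H_two_le_two _)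
  refine Summable.hasSum ?_
  simpa only [pow_succ, mul_assoc] using (summable_mul_pow_of_abs_le hc hx).mul_right x

lemma hasDerivAt_sumH2 {x : ℝ} (hx0 : 0 < x) (hx1 : x < 1) :
    HasDerivAt sumH2 (Li 2 x / (x * (1 - x))) x := by
  have hx : |x| < 1 := by rwa [abs_of_pos hx0]
  rw [← tsum_H_two_succ_mul_pow hx hx0.ne']
  exact hasDerivAt_tsum_div_succ_mul_pow_succ (fun n ↦ abs_H_two_le_two (n + 1)) hx

lemma continuousAt_sumH2_zero : ContinuousAt sumH2 0 :=
  (hasDerivAt_tsum_div_succ_mul_pow_succ (fun n ↦ abs_H_two_le_two (n + 1))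
    (by norm_num : |(0 : ℝ)| < 1)).continuousAt

lemma sumH2_zero : sumH2 0 = 0 := by
  simp [sumH2]

lemma hasDerivAt_sumH2ClosedForm {x : ℝ} (hx0 : 0 < x) (hx1 : x < 1) :
    HasDerivAt sumH2ClosedForm (Li 2 x / (x * (1 - x))) x := by
  have hy0 : 0 < 1 - x := by linarith
  have hx : |x| < 1 := by rwa [abs_of_pos hx0]
  have hy : |1 - x| < 1 := by rw [abs_of_pos hy0]; linarith
  have hsub : HasDerivAt (fun t : ℝ ↦ 1 - t) (-1) x := by
    simpa using (hasDerivAt_id x).const_sub 1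
  have hLi2 := hasDerivAt_Li_succ 1 hx hx0.ne'
  have hLi3 := hasDerivAt_Li_succ 2 hx hx0.ne'
  have hLi2' := (hasDerivAt_Li_succ 1 hy hy0.ne').comp x hsub
  have hLi3' := (hasDerivAt_Li_succ 2 hy hy0.ne').comp x hsub
  have hlog := Real.hasDerivAt_log hx0.ne'
  have hlog' := (Real.hasDerivAt_log hy0.ne').comp x hsub
  have h := (((((hLi2.neg.mul hlog').sub (hlog.mul (hlog'.pow 2))).sub
    ((hlog'.const_mul 2).mul hLi2')).add (hLi3'.const_mul 2)).sub_const (2 * Li 3 1)).add hLi3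
  refine (show HasDerivAt sumH2ClosedForm _ x from h).congr_deriv ?_
  simp only [Function.comp_apply, Pi.neg_apply, Pi.pow_apply]
  rw [Li_one_eq_neg_log hx, Li_one_eq_neg_log hy, sub_sub_cancel]
  field_simp
  ring

lemma tendsto_Li_nhdsGT_zero {m : ℕ} (hm : 2 ≤ m) : Tendsto (Li m) (𝓝[>] 0) (𝓝 0) := by
  have h : ContinuousAt (Li m) 0 :=
    (continuousOn_Li hm).continuousAt (Icc_mem_nhds (by norm_num) (by norm_num))
  simpa [Li_apply_zero] using h.continuousWithinAt.tendsto (s := Set.Ioi 0)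

lemma tendsto_Li_one_sub_nhdsGT_zero {m : ℕ} (hm : 2 ≤ m) :
    Tendsto (fun t ↦ Li m (1 - t)) (𝓝[>] 0) (𝓝 (Li m 1)) := by
  have hsub : Tendsto (fun t : ℝ ↦ 1 - t) (𝓝[>] 0) (𝓝[Set.Icc (-1) 1] 1) := by
    refine tendsto_nhdsWithin_iff.mpr ⟨?_, ?_⟩
    · exact tendsto_nhdsWithin_of_tendsto_nhds
        (by simpa using (continuous_sub_left (1 : ℝ)).tendsto 0)
    · filter_upwards [Ioo_mem_nhdsGT (by norm_num : (0 : ℝ) < 2)] with t ht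
      exact ⟨by linarith [ht.2], by linarith [ht.1]⟩
  exact ((continuousOn_Li hm) 1 (by norm_num)).tendsto.comp hsub

lemma tendsto_log_one_sub_zero : Tendsto (fun t : ℝ ↦ log (1 - t)) (𝓝 0) (𝓝 0) := by
  simpa using ((continuous_sub_left (1 : ℝ)).continuousAt (x := 0)).log (by norm_num) |>.tendsto

lemma tendsto_log_mul_log_one_sub_sq_nhdsGT_zero :
    Tendsto (fun t ↦ log t * log (1 - t) ^ 2) (𝓝[>] 0) (𝓝 0) := by
  have hmul_log : Tendsto (fun t : ℝ ↦ t * log t) (𝓝[>] 0) (𝓝 0) :=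
    tendsto_nhdsWithin_of_tendsto_nhds (by simpa using continuous_mul_log.tendsto 0)
  have hslope : Tendsto (fun t : ℝ ↦ t⁻¹ * log (1 - t)) (𝓝[>] 0) (𝓝 (-1)) := by
    have h := (((hasDerivAt_id (0 : ℝ)).const_sub 1).log (by norm_num)).tendsto_slope_zero_right
    simpa using h
  -- `log t * log (1 - t) ^ 2 = (t * log t) * (log (1 - t) / t) * log (1 - t)`
  have h := (hmul_log.mul hslope).mul (tendsto_nhdsWithin_of_tendsto_nhds tendsto_log_one_sub_zero)
  rw [zero_mul, zero_mul] at h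
  refine h.congr' ?_
  filter_upwards [self_mem_nhdsWithin] with t (ht : 0 < t)
  field_simp

lemma tendsto_sumH2ClosedForm_nhdsGT_zero : Tendsto sumH2ClosedForm (𝓝[>] 0) (𝓝 0) := by
  have hLi2 := tendsto_Li_nhdsGT_zero (le_refl 2)
  have hLi3 := tendsto_Li_nhdsGT_zero (by norm_num : 2 ≤ 3)
  have hLi2' := tendsto_Li_one_sub_nhdsGT_zero (le_refl 2)
  have hLi3' := tendsto_Li_one_sub_nhdsGT_zero (by norm_num : 2 ≤ 3)
  have hlog := tendsto_log_one_sub_zero.mono_left (nhdsWithin_le_nhds (s := Set.Ioi 0))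
  have h : Tendsto sumH2ClosedForm (𝓝[>] 0) _ :=
    (((((hLi2.neg.mul hlog).sub tendsto_log_mul_log_one_sub_sq_nhdsGT_zero).sub
      ((hlog.const_mul 2).mul hLi2')).add (hLi3'.const_mul 2)).sub_const (2 * Li 3 1)).add hLi3
  convert h using 2
  ring

lemma eqOn_Ioo_of_hasDerivAt_of_tendsto_sub_nhdsGT {f g f' : ℝ → ℝ} {a b : ℝ}
    (hf : ∀ x ∈ Set.Ioo a b, HasDerivAt f (f' x) x)
    (hg : ∀ x ∈ Set.Ioo a b, HasDerivAt g (f' x) x)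
    (hlim : Tendsto (fun x ↦ f x - g x) (𝓝[>] a) (𝓝 0)) : Set.EqOn f g (Set.Ioo a b) := by
  intro x hx
  have hderiv : ∀ y ∈ Set.Ioo a b, HasDerivAt (fun y ↦ f y - g y) 0 y := fun y hy ↦
    ((hf y hy).sub (hg y hy)).congr_deriv (sub_self _)
  obtain ⟨c, hc⟩ := isOpen_Ioo.exists_is_const_of_deriv_eq_zero isPreconnected_Ioo
    (fun y hy ↦ (hderiv y hy).differentiableAt.differentiableWithinAt)
    (fun y hy ↦ (hderiv y hy).deriv)
  have hconst : Tendsto (fun x ↦ f x - g x) (𝓝[>] a) (𝓝 c) := by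
    refine tendsto_const_nhds.congr' ?_
    filter_upwards [Ioo_mem_nhdsGT (hx.1.trans hx.2)] with y hy using (hc y hy).symm
  have hc0 : c = 0 := tendsto_nhds_unique hconst hlim
  exact sub_eq_zero.mp ((hc x hx).trans hc0)

lemma sumH2_eq_sumH2ClosedForm : Set.EqOn sumH2 sumH2ClosedForm (Set.Ioo 0 1) := by
  refine eqOn_Ioo_of_hasDerivAt_of_tendsto_sub_nhdsGT (fun x hx ↦ hasDerivAt_sumH2 hx.1 hx.2)
    (fun x hx ↦ hasDerivAt_sumH2ClosedForm hx.1 hx.2) ?_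
  have h := (continuousAt_sumH2_zero.tendsto.mono_left nhdsWithin_le_nhds).sub
    tendsto_sumH2ClosedForm_nhdsGT_zero
  rwa [sumH2_zero, sub_zero] at h

theorem stmt6 (x : ℝ) (hx0 : 0 < x) (hx1 : x < 1) :
    Filter.Tendsto (fun N => ∑ n ∈ Finset.Icc 1 N, H 2 n / (n : ℝ) * x ^ n)
      Filter.atTop
      (nhds (-Li 2 x * Real.log (1 - x) - Real.log x * (Real.log (1 - x)) ^ 2
        - 2 * Real.log (1 - x) * Li 2 (1 - x) + 2 * Li 3 (1 - x)
        - 2 * Li 3 1 + Li 3 x)) := by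
  have h := (hasSum_sumH2 (abs_lt.mpr ⟨by linarith, hx1⟩)).tendsto_sum_nat
  rw [sumH2_eq_sumH2ClosedForm ⟨hx0, hx1⟩] at h
  refine h.congr fun N ↦ ?_
  rw [sum_Icc_one_eq_sum_range]
  push_cast
  rfl
end

section
/- For real x with |x| < 1, ∑_{n=1}^∞ (H̄_n/n) x^n = -log(2) log(1-x) + Li_2((1-x)/2) - Li_2(1/2) - Li_2(-x). -/
open Real Filter Finset

/-!
Write `F(x) = ∑ H̄ₙ xⁿ / n` and `G(x)` for the right-hand side; both vanish at `0`, so it suffices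
to compare derivatives on `(-1, 1)`. Since `H̄ₙ - H̄ₙ₋₁ = (-1)ⁿ⁻¹ / n`, multiplying `∑ H̄ₙ xⁿ` by
`1 - x` telescopes it to the series of `log (1 + x)`, so `x F'(x) = log (1 + x) / (1 - x)`.
Termwise, `y Li₂'(y) = -log (1 - y)`, and the three terms of `x G'(x)` add up to the same value.
-/

section TermwiseIntegral

variable {c : ℕ → ℝ} {C : ℝ}

lemma summable_mul_pow_succ_div (hc : ∀ n, |c n| ≤ C * (n + 1)) {x : ℝ} (hx : |x| < 1) :
    Summable fun n : ℕ => c n * x ^ (n + 1) / (n + 1) := by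
  refine .of_norm_bounded ((summable_geometric_of_abs_lt_one (abs_abs x ▸ hx)).mul_left C)
    fun n => ?_
  have hn : (0 : ℝ) < n + 1 := by positivity
  rw [Real.norm_eq_abs, abs_div, abs_mul, abs_pow, abs_of_pos hn, div_le_iff₀ hn]
  calc |c n| * |x| ^ (n + 1) ≤ C * (n + 1) * |x| ^ n := by
        rw [pow_succ]
        exact mul_le_mul (hc n) (mul_le_of_le_one_right (by positivity) hx.le) (by positivity)
          ((abs_nonneg _).trans (hc n))
    _ = C * |x| ^ n * (n + 1) := by ring

lemma hasDerivAt_tsum_mul_pow_succ_div (hc : ∀ n, |c n| ≤ C * (n + 1)) {x : ℝ} (hx : |x| < 1) :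
    HasDerivAt (fun y => ∑' n : ℕ, c n * y ^ (n + 1) / (n + 1)) (∑' n : ℕ, c n * x ^ n) x := by
  obtain ⟨r, hxr, hr1⟩ := exists_between hx
  have hr : ‖r‖ < 1 := by rwa [Real.norm_of_nonneg ((abs_nonneg x).trans hxr.le)]
  refine hasDerivAt_tsum_of_isPreconnected
    (g := fun (n : ℕ) (y : ℝ) => c n * y ^ (n + 1) / (n + 1))
    (g' := fun (n : ℕ) (y : ℝ) => c n * y ^ n)
    (u := fun n : ℕ => C * ((n : ℝ) ^ 1 * r ^ n + r ^ n))
    (((summable_pow_mul_geometric_of_norm_lt_one 1 hr).add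
      (summable_geometric_of_norm_lt_one hr)).mul_left C) isOpen_Ioo isPreconnected_Ioo
    (fun n y _ => ?_) (fun n y hy => ?_) (y₀ := (0 : ℝ)) ?_ ?_ (abs_lt.1 hxr)
  · refine (((hasDerivAt_pow (n + 1) y).const_mul (c n)).div_const ((n : ℝ) + 1)).congr_deriv ?_
    push_cast
    field_simp
  · have hyr : |y| ≤ r := (abs_lt.2 hy).le
    rw [norm_mul, norm_pow, Real.norm_eq_abs, Real.norm_eq_abs, pow_one, ← add_one_mul, ← mul_assoc]
    exact mul_le_mul (hc n) (pow_le_pow_left₀ (abs_nonneg y) hyr n) (by positivity)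
      ((abs_nonneg _).trans (hc n))
  · exact ⟨by linarith [abs_nonneg x], (abs_nonneg x).trans_lt hxr⟩
  · simp

end TermwiseIntegral

lemma hasDerivAt_Li_two {y : ℝ} (hy : |y| < 1) :
    HasDerivAt (Li 2) (∑' n : ℕ, y ^ n / (n + 1)) y := by
  have hc (n : ℕ) : |1 / ((n : ℝ) + 1)| ≤ 1 * (n + 1) := by
    rw [abs_of_pos (by positivity), one_mul, div_le_iff₀ (by positivity)]
    nlinarith [n.cast_nonneg (α := ℝ)]
  convert hasDerivAt_tsum_mul_pow_succ_div hc hy using 1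
  · ext z
    refine tsum_congr fun n => ?_
    field_simp
  · refine tsum_congr fun n => ?_
    ring

lemma mul_tsum_pow_div_succ {y : ℝ} (hy : |y| < 1) :
    y * ∑' n : ℕ, y ^ n / (n + 1) = -log (1 - y) := by
  rw [← tsum_mul_left, ← (hasSum_pow_div_log_of_abs_lt_one hy).tsum_eq]
  exact tsum_congr fun n => by ring

lemma abs_Hbar_le (p n : ℕ) : |Hbar p n| ≤ n := by
  calc |Hbar p n| ≤ ∑ j ∈ Icc 1 n, |(-1 : ℝ) ^ (j - 1) / (j : ℝ) ^ p| := abs_sum_le_sum_abs _ _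
    _ ≤ ∑ _j ∈ Icc 1 n, (1 : ℝ) := sum_le_sum fun j hj => ?_
    _ = n := by simp
  have hj : (1 : ℝ) ≤ j := by exact_mod_cast (mem_Icc.1 hj).1
  rw [abs_div, abs_pow, abs_neg, abs_one, one_pow, abs_pow, Nat.abs_cast]
  exact div_le_one_of_le₀ (one_le_pow₀ hj) (by positivity)

lemma Hbar_one_succ_sub (n : ℕ) : Hbar 1 (n + 1) - Hbar 1 n = (-1) ^ n / (n + 1) := by
  rw [Hbar, Hbar, sum_Icc_succ_top (by omega)]
  simp

lemma hasSum_Hbar_one_succ_mul_pow_succ {x : ℝ} (hx : |x| < 1) :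
    HasSum (fun n : ℕ => Hbar 1 (n + 1) * x ^ (n + 1)) (log (1 + x) / (1 - x)) := by
  obtain ⟨S, hS⟩ : Summable fun n : ℕ => Hbar 1 n * x ^ n := by
    refine .of_norm_bounded (summable_pow_mul_geometric_of_norm_lt_one 1 (r := |x|)
      (by rwa [norm_abs_eq_norm])) fun n => ?_
    rw [norm_mul, norm_pow, Real.norm_eq_abs, Real.norm_eq_abs, pow_one]
    exact mul_le_mul_of_nonneg_right (abs_Hbar_le 1 n) (by positivity)
  have hshift : HasSum (fun n : ℕ => Hbar 1 (n + 1) * x ^ (n + 1)) S := by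
    simpa [Hbar] using (hasSum_nat_add_iff' 1).2 hS
  have hlog : HasSum (fun n : ℕ => (Hbar 1 (n + 1) - Hbar 1 n) * x ^ (n + 1)) (log (1 + x)) := by
    have h := (hasSum_pow_div_log_of_abs_lt_one (x := -x) (by rwa [abs_neg])).neg
    rw [sub_neg_eq_add, neg_neg] at h
    refine h.congr_fun fun n => ?_
    rw [Hbar_one_succ_sub, neg_pow, pow_succ]
    ring
  have hdiff : HasSum (fun n : ℕ => (Hbar 1 (n + 1) - Hbar 1 n) * x ^ (n + 1)) ((1 - x) * S) := by
    rw [sub_mul, one_mul]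
    exact (hshift.sub (hS.mul_left x)).congr_fun fun n => by ring
  rwa [hlog.unique hdiff, mul_div_cancel_left₀ _ (by linarith [(abs_lt.1 hx).2] : 1 - x ≠ 0)]

lemma tsum_Hbar_one_succ_mul_pow_eq {x : ℝ} (hx : |x| < 1) :
    ∑' n : ℕ, Hbar 1 (n + 1) * x ^ n =
      log 2 / (1 - x) - (∑' n : ℕ, ((1 - x) / 2) ^ n / (n + 1)) / 2
        + ∑' n : ℕ, (-x) ^ n / (n + 1) := by
  obtain ⟨hx₁, hx₂⟩ := abs_lt.1 hx
  have hhalf := mul_tsum_pow_div_succ (y := (1 - x) / 2) (abs_lt.2 ⟨by linarith, by linarith⟩)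
  -- Multiplying by `x` loses the point `0`, where every series reduces to its constant term.
  rcases eq_or_ne x 0 with rfl | hx0
  · have hHbar : ∑' n : ℕ, Hbar 1 (n + 1) * (0 : ℝ) ^ n = 1 := by
      rw [tsum_eq_single 0 fun n hn => by simp [hn]]
      simp [Hbar]
    have hdlog : ∑' n : ℕ, (0 : ℝ) ^ n / (n + 1) = 1 := by
      rw [tsum_eq_single 0 fun n hn => by simp [hn]]
      simp
    rw [hHbar, neg_zero, hdlog]
    norm_num [← log_inv] at hhalf ⊢
    linarith
  · apply mul_left_cancel₀ hx0
    have hS : x * ∑' n : ℕ, Hbar 1 (n + 1) * x ^ n = log (1 + x) / (1 - x) := by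
      rw [← tsum_mul_left, ← (hasSum_Hbar_one_succ_mul_pow_succ hx).tsum_eq]
      exact tsum_congr fun n => by ring
    have hneg := mul_tsum_pow_div_succ (y := -x) (by rwa [abs_neg])
    rw [show 1 - (1 - x) / 2 = (1 + x) / 2 by ring, log_div (by linarith) two_ne_zero] at hhalf
    rw [sub_neg_eq_add] at hneg
    have h1x : 1 - x ≠ 0 := by linarith
    rw [hS]
    field_simp
    linear_combination 2 * x * hhalf + 2 * (1 - x) * hneg

lemma hasDerivAt_Li_two_combination {x : ℝ} (hx : |x| < 1) :
    HasDerivAt (fun y => -log 2 * log (1 - y) + Li 2 ((1 - y) / 2) - Li 2 (1 / 2) - Li 2 (-y))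
      (log 2 / (1 - x) - (∑' n : ℕ, ((1 - x) / 2) ^ n / (n + 1)) / 2
        + ∑' n : ℕ, (-x) ^ n / (n + 1)) x := by
  obtain ⟨hx₁, hx₂⟩ := abs_lt.1 hx
  have hsub := (hasDerivAt_id' x).const_sub 1
  have hlog := hsub.log (by linarith)
  have hhalf := (hasDerivAt_Li_two (y := (1 - x) / 2)
    (abs_lt.2 ⟨by linarith, by linarith⟩)).comp x (hsub.div_const 2)
  have hneg := (hasDerivAt_Li_two (y := -x) (by rwa [abs_neg])).comp x (hasDerivAt_neg x)
  refine ((((hlog.const_mul (-log 2)).add hhalf).sub_const _).sub hneg).congr_deriv ?_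
  ring

lemma hasSum_Hbar_one_succ_mul_pow_succ_div {x : ℝ} (hx : |x| < 1) :
    HasSum (fun n : ℕ => Hbar 1 (n + 1) * x ^ (n + 1) / (n + 1))
      (-log 2 * log (1 - x) + Li 2 ((1 - x) / 2) - Li 2 (1 / 2) - Li 2 (-x)) := by
  have hc (n : ℕ) : |Hbar 1 (n + 1)| ≤ 1 * (n + 1) := by simpa using abs_Hbar_le 1 (n + 1)
  have hF (y : ℝ) (hy : y ∈ Set.Ioo (-1) 1) := hasDerivAt_tsum_mul_pow_succ_div hc (abs_lt.2 hy)
  have hG (y : ℝ) (hy : y ∈ Set.Ioo (-1) 1) :=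
    hasDerivAt_Li_two_combination (abs_lt.2 hy)
  convert (summable_mul_pow_succ_div hc hx).hasSum using 1
  refine (isOpen_Ioo.eqOn_of_deriv_eq isPreconnected_Ioo
    (fun y hy => (hF y hy).differentiableAt.differentiableWithinAt)
    (fun y hy => (hG y hy).differentiableAt.differentiableWithinAt) (fun y hy => ?_)
    (x := 0) ⟨by norm_num, by norm_num⟩ ?_ (abs_lt.1 hx)).symm
  · rw [(hF y hy).deriv, (hG y hy).deriv, tsum_Hbar_one_succ_mul_pow_eq (abs_lt.2 hy)]
  · simp [Li]

theorem stmt12 (x : ℝ) (hx : |x| < 1) :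
    Filter.Tendsto (fun N => ∑ n ∈ Finset.Icc 1 N, Hbar 1 n / (n : ℝ) * x ^ n)
      Filter.atTop
      (nhds (-Real.log 2 * Real.log (1 - x) + Li 2 ((1 - x) / 2)
        - Li 2 (1 / 2) - Li 2 (-x))) := by
  refine (hasSum_Hbar_one_succ_mul_pow_succ_div hx).tendsto_sum_nat.congr fun N => ?_
  rw [← Ico_add_one_right_eq_Icc, sum_Ico_eq_sum_range, Nat.add_sub_cancel]
  refine sum_congr rfl fun k _ => ?_
  rw [add_comm 1 k]
  push_cast
  ring
end
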